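/- arXiv:2502.05678 — 2 statements merged into one kernel-verified Lean document; each statement's English description precedes it below -/
import Mathlib

section
/- Let A be an m×m matrix over the complex zeon algebra, and let v₁, v₂ be eigenvectors of A with zeon eigenvalues λ₁, λ₂ whose scalar parts differ (Cλ₁ ≠ Cλ₂). Then v₁ and v₂ are linearly independent over CZ: if α₁v₁ + α₂v₂ = 0 with α₁, α₂ ∈ CZ, then α₁ = α₂ = 0. -/
open scoped BigOperators

noncomputable section

/-- The ideal of squares of generators in the polynomial ring. -/
def zeonIdeal (n : ℕ) : Ideal (MvPolynomial (Fin n) ℂ) :=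
  Ideal.span {p : MvPolynomial (Fin n) ℂ | ∃ i : Fin n, p = MvPolynomial.X i ^ 2}

/-- The `n`-particle complex zeon algebra. -/
abbrev Zeon (n : ℕ) := MvPolynomial (Fin n) ℂ ⧸ zeonIdeal n

/-- The zeon generators. -/
def zeta (n : ℕ) (i : Fin n) : Zeon n := Ideal.Quotient.mk _ (MvPolynomial.X i)

/-- Basis blades. -/
def zetaBlade (n : ℕ) (I : Finset (Fin n)) : Zeon n := ∏ i ∈ I, zeta n i

/-- Scalar part map. -/
def scalarPart (n : ℕ) : Zeon n →+* ℂ :=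
  Ideal.Quotient.lift _ (MvPolynomial.aeval (fun _ : Fin n => (0:ℂ))).toRingHom
    (fun a ha => by
      have h : zeonIdeal n ≤
          RingHom.ker (MvPolynomial.aeval (fun _ : Fin n => (0:ℂ))).toRingHom := by
        rw [zeonIdeal, Ideal.span_le]
        rintro p ⟨i, rfl⟩
        simp [RingHom.mem_ker]
      exact h ha)

/-- Dual (nilpotent) part. -/
def dualPart (n : ℕ) (u : Zeon n) : Zeon n := u - algebraMap ℂ (Zeon n) (scalarPart n u)

/-- Conjugation on zeons: conjugate the complex coefficients, fix the generators. -/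
def zconj (n : ℕ) : Zeon n →+* Zeon n :=
  Ideal.Quotient.lift _
    ((Ideal.Quotient.mk (zeonIdeal n)).comp (MvPolynomial.map (starRingEnd ℂ)))
    (fun a ha => by
      have h : zeonIdeal n ≤ RingHom.ker
          ((Ideal.Quotient.mk (zeonIdeal n)).comp (MvPolynomial.map (starRingEnd ℂ))) := by
        rw [zeonIdeal, Ideal.span_le]
        rintro p ⟨i, rfl⟩
        simp only [Set.mem_setOf_eq, SetLike.mem_coe, RingHom.mem_ker, RingHom.comp_apply,
          map_pow, MvPolynomial.map_X]
        rw [← map_pow, Ideal.Quotient.eq_zero_iff_mem]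
        exact Ideal.subset_span ⟨i, rfl⟩
      exact h ha)

end

section AuxLemmas

lemma scalarPart_mk' (n : ℕ) (p : MvPolynomial (Fin n) ℂ) :
    scalarPart n (Ideal.Quotient.mk _ p) = MvPolynomial.constantCoeff p := by
  simp [scalarPart, Ideal.Quotient.lift_mk]

lemma scalarPart_algebraMap' (n : ℕ) (c : ℂ) :
    scalarPart n (algebraMap ℂ (Zeon n) c) = c := by
  have : algebraMap ℂ (Zeon n) c = Ideal.Quotient.mk _ (MvPolynomial.C c) := rfl
  rw [this, scalarPart_mk']; simp

lemma isNilpotent_of_scalarPart_eq_zero (n : ℕ) (u : Zeon n)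
    (h : scalarPart n u = 0) : IsNilpotent u := by
  obtain ⟨p, rfl⟩ := Ideal.Quotient.mk_surjective u
  rw [scalarPart_mk'] at h
  have hp : p ∈ Ideal.span (MvPolynomial.X '' (Set.univ : Set (Fin n)) :
      Set (MvPolynomial (Fin n) ℂ)) := by
    rw [MvPolynomial.mem_ideal_span_X_image]
    intro m hm
    have hm0 : m ≠ 0 := by
      rintro rfl
      exact MvPolynomial.mem_support_iff.mp hm h
    obtain ⟨i, hi⟩ := Finsupp.ne_iff.mp hm0
    exact ⟨i, Set.mem_univ i, by simpa using hi⟩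
  have hmap : (Ideal.Quotient.mk (zeonIdeal n)) p ∈
      Ideal.map (Ideal.Quotient.mk (zeonIdeal n))
        (Ideal.span (MvPolynomial.X '' (Set.univ : Set (Fin n)))) :=
    Ideal.mem_map_of_mem _ hp
  rw [Ideal.map_span] at hmap
  rw [← mem_nilradical]
  refine Ideal.span_le.mpr ?_ hmap
  rintro q ⟨r, ⟨i, -, rfl⟩, rfl⟩
  simp only [SetLike.mem_coe, mem_nilradical]
  refine ⟨2, ?_⟩
  rw [← map_pow, Ideal.Quotient.eq_zero_iff_mem]
  exact Ideal.subset_span ⟨i, rfl⟩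

lemma isUnit_of_scalarPart_ne_zero (n : ℕ) (u : Zeon n)
    (h : scalarPart n u ≠ 0) : IsUnit u := by
  have hd : IsNilpotent (u - algebraMap ℂ (Zeon n) (scalarPart n u)) := by
    apply isNilpotent_of_scalarPart_eq_zero
    rw [map_sub, scalarPart_algebraMap', sub_self]
  have hu : IsUnit (algebraMap ℂ (Zeon n) (scalarPart n u)) :=
    (isUnit_iff_ne_zero.mpr h).map _
  have := hd.isUnit_add_right_of_commute hu (Commute.all _ _)
  simpa using this

end AuxLemmas

set_option maxHeartbeats 1000000
set_option synthInstance.maxHeartbeats 200000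

/-- eigenvectors whose zeon eigenvalues have distinct scalar
parts are linearly independent over the zeon algebra. -/
theorem zeon_eigenvectors_linearIndependent (n m : ℕ)
    (A : Matrix (Fin m) (Fin m) (Zeon n))
    (lam₁ lam₂ : Zeon n) (v₁ v₂ : Fin m → Zeon n)
    (hv₁ : ∃ i, scalarPart n (v₁ i) ≠ 0)
    (hv₂ : ∃ i, scalarPart n (v₂ i) ≠ 0)
    (h₁ : A.mulVec v₁ = lam₁ • v₁)
    (h₂ : A.mulVec v₂ = lam₂ • v₂)
    (hne : scalarPart n lam₁ ≠ scalarPart n lam₂)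
    (α₁ α₂ : Zeon n)
    (hlin : α₁ • v₁ + α₂ • v₂ = 0) :
    α₁ = 0 ∧ α₂ = 0 := by
  obtain ⟨i, hi⟩ := hv₁
  obtain ⟨j, hj⟩ := hv₂
  have e0 : ∀ k, α₁ * v₁ k + α₂ * v₂ k = 0 := fun k => by
    have := congrFun hlin k
    simpa [Pi.add_apply, Pi.smul_apply, smul_eq_mul] using this
  have e1 : ∀ k, α₁ * (lam₁ * v₁ k) + α₂ * (lam₂ * v₂ k) = 0 := fun k => by
    have hk1 := congrFun h₁ k
    have hk2 := congrFun h₂ k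
    simp only [Matrix.mulVec, dotProduct, Pi.smul_apply, smul_eq_mul] at hk1 hk2
    rw [← hk1, ← hk2, Finset.mul_sum, Finset.mul_sum, ← Finset.sum_add_distrib]
    refine Finset.sum_eq_zero fun l _ => ?_
    linear_combination A k l * e0 l
  have key : α₁ * ((lam₁ - lam₂) * v₁ i) = 0 := by
    linear_combination e1 i - lam₂ * e0 i
  have hα₁ : α₁ = 0 := by
    have hu : IsUnit ((lam₁ - lam₂) * v₁ i) := by
      apply isUnit_of_scalarPart_ne_zero
      rw [map_mul, map_sub]
      exact mul_ne_zero (sub_ne_zero_of_ne hne) hi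
    obtain ⟨w, hw⟩ := hu
    have h' := congrArg (· * (↑w⁻¹ : Zeon n)) key
    simpa [← hw, mul_assoc] using h'
  refine ⟨hα₁, ?_⟩
  have key2 : α₂ * v₂ j = 0 := by
    have h' := e0 j
    rwa [hα₁, zero_mul, zero_add] at h'
  have hu2 : IsUnit (v₂ j) := isUnit_of_scalarPart_ne_zero n _ hj
  obtain ⟨w, hw⟩ := hu2
  have h' := congrArg (· * (↑w⁻¹ : Zeon n)) key2
  simpa [← hw, mul_assoc] using h'
end

section
/- Let Ψ be the nilpotent adjacency matrix of a simple graph G on m vertices. For each vertex i and each positive integer k, the (i,i) entry of (Ψ + Ψ†)^k equals twice the (i,i) entry of Ψ^k; that is, ⟨i|(Ψ+Ψ†)^k|i⟩ = 2 Σ_{|I|=k} ω_I ζ_I where ω_I is the number of k-cycles based at v_i on vertex set I. -/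
open scoped BigOperators

noncomputable section

/-- Nilpotent adjacency matrix of a simple graph. -/
def nilAdj {m : ℕ} (G : SimpleGraph (Fin m)) [DecidableRel G.Adj] :
    Matrix (Fin m) (Fin m) (Zeon m) :=
  fun i j => if G.Adj i j then zeta m j else 0

/-- Conjugate transpose of the nilpotent adjacency matrix. -/
def nilAdjDag {m : ℕ} (G : SimpleGraph (Fin m)) [DecidableRel G.Adj] :
    Matrix (Fin m) (Fin m) (Zeon m) :=
  fun i j => zconj m (nilAdj G j i)

/-- The zeon combinatorial Laplacian. -/
def zeonLaplacian {m : ℕ} (G : SimpleGraph (Fin m)) [DecidableRel G.Adj] :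
    Matrix (Fin m) (Fin m) (Zeon m) :=
  Matrix.diagonal (fun i => (G.degree i : Zeon m)) - nilAdj G

/-- Number of `k`-cycles based at `i` whose vertex set is `I`: closed walks
`c 0 = i, c 1, ..., c k = i` whose first `k` vertices are pairwise distinct and
have image exactly `I`. -/
def numCycles {m : ℕ} (G : SimpleGraph (Fin m)) [DecidableRel G.Adj]
    (i : Fin m) (k : ℕ) (I : Finset (Fin m)) : ℕ :=
  (Finset.univ.filter (fun c : Fin (k + 1) → Fin m =>
    c 0 = i ∧ c (Fin.last k) = i ∧
    (∀ j : Fin k, G.Adj (c j.castSucc) (c j.succ)) ∧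
    (∀ a b : Fin k, c a.castSucc = c b.castSucc → a = b) ∧
    Finset.image (fun j : Fin k => c j.castSucc) Finset.univ = I)).card

end
/-!
Conjugation fixes the generators, so `Ψ† = Ψᵀ`. Every entry of column `j` of `Ψ` is `ζ_j` or
`0`, so column `j` of `Ψ` and of each power `Ψ^s`, `s ≥ 1`, is divisible by `ζ_j`, and
`ζ_j² = 0`. Hence `ΨΨᵀ = 0`, which makes `(Ψ + Ψᵀ)^k = ∑_{a+b=k} (Ψᵀ)^a Ψ^b`, and each mixed
term has zero `(i,i)` entry, as `((Ψᵀ)^a Ψ^b)_{ii} = ∑_l (Ψ^a)_{li} (Ψ^b)_{li}` with both factors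
divisible by `ζ_i`. Expanding `(Ψ^k)_{ii}` over closed walks, a walk contributes the product of
the `ζ`'s of its vertices: zero if a vertex repeats, and otherwise the blade of its vertex set.
-/

open Finset Matrix

theorem add_pow_eq_sum_antidiagonal_of_mul_eq_zero {R : Type*} [Semiring R] {a b : R}
    (h : a * b = 0) (k : ℕ) :
    (a + b) ^ k = ∑ p ∈ antidiagonal k, b ^ p.1 * a ^ p.2 := by
  induction k with
  | zero => simp
  | succ k ih =>
    have ha : a * (a + b) ^ k = a ^ (k + 1) :=
      ((SemiconjBy.pow_right (by simp [SemiconjBy, mul_add, h]) k) : a * _ = a ^ k * a).trans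
        (pow_succ a k).symm
    rw [Nat.sum_antidiagonal_succ, pow_succ', add_mul, ha, ih, mul_sum]
    simp [pow_succ', mul_assoc]

theorem mul_eq_zero_of_dvd_of_dvd {R : Type*} [CommMonoidWithZero R] {z x y : R}
    (hz : z * z = 0) (hx : z ∣ x) (hy : z ∣ y) : x * y = 0 := by
  obtain ⟨x, rfl⟩ := hx
  obtain ⟨y, rfl⟩ := hy
  rw [mul_mul_mul_comm, hz, zero_mul]

namespace Matrix

variable {n R : Type*} [Fintype n] [CommSemiring R] {A : Matrix n n R} {z : n → R}

theorem mul_transpose_eq_zero_of_dvd (hz : ∀ j, z j * z j = 0)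
    (hA : ∀ i j, z j ∣ A i j) : A * Aᵀ = 0 := by
  ext i j
  exact sum_eq_zero fun l _ => mul_eq_zero_of_dvd_of_dvd (hz l) (hA i l) (hA j l)

variable [DecidableEq n]

theorem dvd_pow_apply (hA : ∀ i j, z j ∣ A i j) {s : ℕ} (hs : 0 < s) (i j : n) :
    z j ∣ (A ^ s) i j := by
  obtain ⟨s, rfl⟩ := Nat.exists_eq_add_one_of_ne_zero hs.ne'
  rw [pow_succ, mul_apply]
  exact dvd_sum fun l _ => dvd_mul_of_dvd_right (hA l j) _

theorem add_transpose_pow_apply_self (hz : ∀ j, z j * z j = 0)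
    (hA : ∀ i j, z j ∣ A i j) {k : ℕ} (hk : 0 < k) (i : n) :
    ((A + Aᵀ) ^ k) i i = 2 * (A ^ k) i i := by
  have hmixed : ∀ p ∈ antidiagonal k, p ≠ (0, k) ∧ p ≠ (k, 0) →
      (Aᵀ ^ p.1 * A ^ p.2) i i = 0 := by
    rintro ⟨s, t⟩ hst ⟨hs, ht⟩
    rw [HasAntidiagonal.mem_antidiagonal] at hst
    rw [mul_apply]
    refine sum_eq_zero fun l _ => ?_
    rw [← transpose_pow, transpose_apply]
    exact mul_eq_zero_of_dvd_of_dvd (hz i) (dvd_pow_apply hA (by grind) l i)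
      (dvd_pow_apply hA (by grind) l i)
  rw [add_pow_eq_sum_antidiagonal_of_mul_eq_zero (mul_transpose_eq_zero_of_dvd hz hA), sum_apply,
    sum_eq_add_of_mem (0, k) (k, 0) (by simp) (by simp) (by simp [hk.ne]) hmixed]
  simp [← transpose_pow, two_mul]

theorem pow_apply_eq_sum_prod (M : Matrix n n R) (k : ℕ) (i j : n) :
    (M ^ k) i j = ∑ c : Fin (k + 1) → n with c 0 = i ∧ c (Fin.last k) = j,
      ∏ t : Fin k, M (c t.castSucc) (c t.succ) := by
  induction k generalizing j with
  | zero =>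
    rw [pow_zero, one_apply, sum_filter, ← (Equiv.funUnique (Fin 1) n).symm.sum_comp]
    simp [ite_and]
  | succ k ih =>
    rw [pow_succ, mul_apply, sum_filter, ← (Fin.snocEquiv fun _ => n).sum_comp,
      Fintype.sum_prod_type_right]
    simp_rw [ih, sum_filter, sum_mul]
    rw [sum_comm]
    simp [Fin.snocEquiv, Fin.prod_univ_castSucc, Fin.succ_castSucc, -Fin.castSucc_succ, ite_and]

end Matrix

theorem Fin.prod_univ_succ_eq_prod_univ_castSucc_of_zero_eq_last {M : Type*} [CommMonoid M]
    {k : ℕ} (f : Fin (k + 1) → M) (hf : f 0 = f (Fin.last k)) :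
    ∏ t : Fin k, f t.succ = ∏ t : Fin k, f t.castSucc := by
  cases k with
  | zero => simp
  | succ k =>
    rw [Fin.prod_univ_castSucc, Fin.prod_univ_succ, mul_comm, Fin.succ_last, ← hf]
    simp_rw [Fin.succ_castSucc, Fin.castSucc_zero]

theorem zeta_mul_self (n : ℕ) (i : Fin n) : zeta n i * zeta n i = 0 := by
  rw [zeta, ← map_mul, ← sq, Ideal.Quotient.eq_zero_iff_mem]
  exact Ideal.subset_span ⟨i, rfl⟩

theorem zconj_zeta (n : ℕ) (i : Fin n) : zconj n (zeta n i) = zeta n i :=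
  congrArg (Ideal.Quotient.mk (zeonIdeal n)) (MvPolynomial.map_X _ i)

theorem prod_zeta_eq_ite {n : ℕ} {ι : Type*} [Fintype ι] [DecidableEq ι] (g : ι → Fin n) :
    ∏ t, zeta n (g t) = if Function.Injective g then zetaBlade n (univ.image g) else 0 := by
  split_ifs with hg
  · rw [zetaBlade, prod_image hg.injOn]
  · obtain ⟨a, b, hab, hne⟩ := Function.not_injective_iff.1 hg
    rw [← mul_prod_erase univ _ (mem_univ a),
      ← mul_prod_erase _ _ (mem_erase.2 ⟨Ne.symm hne, mem_univ b⟩), ← mul_assoc, hab,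
      zeta_mul_self, zero_mul]

section NilpotentAdjacency

variable {m : ℕ} (G : SimpleGraph (Fin m)) [DecidableRel G.Adj]

theorem nilAdjDag_eq_transpose : nilAdjDag G = (nilAdj G)ᵀ := by
  ext i j
  simp only [nilAdjDag, nilAdj, transpose_apply]
  split_ifs
  · exact zconj_zeta m i
  · exact map_zero _

theorem zeta_dvd_nilAdj (i j : Fin m) : zeta m j ∣ nilAdj G i j := by
  unfold nilAdj
  split_ifs
  · exact dvd_rfl
  · exact dvd_zero _

theorem nilAdj_pow_apply (k : ℕ) (i j : Fin m) :
    (nilAdj G ^ k) i j = ∑ c : Fin (k + 1) → Fin m with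
      c 0 = i ∧ c (Fin.last k) = j ∧ ∀ t : Fin k, G.Adj (c t.castSucc) (c t.succ),
      ∏ t : Fin k, zeta m (c t.succ) := by
  simp only [pow_apply_eq_sum_prod, nilAdj, Fintype.prod_ite_zero, sum_filter, ite_and]
  -- the two sides differ only in their `Decidable` instances
  congr!

theorem nilAdj_pow_apply_self (k : ℕ) (i : Fin m) :
    (nilAdj G ^ k) i i = ∑ I : Finset (Fin m) with I.card = k,
      (numCycles G i k I : Zeon m) * zetaBlade m I := by
  set W : Finset (Fin (k + 1) → Fin m) :=
    {c | c 0 = i ∧ c (Fin.last k) = i ∧ ∀ t : Fin k, G.Adj (c t.castSucc) (c t.succ)}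
  set C := {c ∈ W | Function.Injective fun t : Fin k => c t.castSucc}
  have hcycles (I : Finset (Fin m)) :
      numCycles G i k I = #{c ∈ C | univ.image (fun t : Fin k => c t.castSucc) = I} := by
    unfold numCycles
    congr 1
    ext c
    simp only [C, W, mem_filter]
    simp only [mem_univ, true_and, and_assoc, Function.Injective]
  calc (nilAdj G ^ k) i i
      = ∑ c ∈ W, ∏ t : Fin k, zeta m (c t.castSucc) := by
        rw [nilAdj_pow_apply]
        refine sum_congr rfl fun c hc => ?_
        rw [mem_filter] at hc
        exact Fin.prod_univ_succ_eq_prod_univ_castSucc_of_zero_eq_last (fun t => zeta m (c t))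
          (by rw [hc.2.1, hc.2.2.1])
    _ = ∑ c ∈ W, if Function.Injective fun t : Fin k => c t.castSucc then
          zetaBlade m (univ.image fun t : Fin k => c t.castSucc) else 0 :=
        sum_congr rfl fun c _ => prod_zeta_eq_ite _
    _ = ∑ c ∈ C, zetaBlade m (univ.image fun t : Fin k => c t.castSucc) := (sum_filter _ _).symm
    _ = ∑ I : Finset (Fin m) with I.card = k,
          ∑ c ∈ C with univ.image (fun t : Fin k => c t.castSucc) = I, zetaBlade m I := by
        refine (sum_fiberwise_of_maps_to' (fun c hc => ?_) _).symm
        rw [mem_filter] at hc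
        simp [card_image_of_injective _ hc.2]
    _ = _ := by simp_rw [sum_const, hcycles, nsmul_eq_mul]

end NilpotentAdjacency

/-- the `(i,i)` entry of `(Ψ + Ψ†)^k` is twice that of `Ψ^k`,
i.e. twice the cycle enumerator. -/
theorem symm_nilAdj_pow_diag (m : ℕ) (G : SimpleGraph (Fin m)) [DecidableRel G.Adj]
    (i : Fin m) (k : ℕ) (hk : 0 < k) :
    ((nilAdj G + nilAdjDag G) ^ k) i i = 2 * ((nilAdj G ^ k) i i) ∧
    ((nilAdj G + nilAdjDag G) ^ k) i i =
      2 * ∑ I ∈ Finset.univ.filter (fun I : Finset (Fin m) => I.card = k),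
        (numCycles G i k I : Zeon m) * zetaBlade m I := by
  have hdiag : ((nilAdj G + nilAdjDag G) ^ k) i i = 2 * (nilAdj G ^ k) i i := by
    rw [nilAdjDag_eq_transpose]
    exact add_transpose_pow_apply_self (zeta_mul_self m) (zeta_dvd_nilAdj G) hk i
  exact ⟨hdiag, by rw [hdiag, nilAdj_pow_apply_self]⟩
end
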